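/- arXiv:2206.14027 — 5 statements merged into one kernel-verified Lean document; each statement's English description precedes it below -/
import Mathlib

section
/- Let k be an algebraically closed field of characteristic ℓ, and let p, q be primes with p ≠ ℓ, q ≠ ℓ, and p ≠ q. Suppose k contains a primitive p-th root of unity ζ. If X, Y ∈ k[T] satisfy X^p − Y^q = 1, then X and Y are constants. -/
open Polynomial

theorem Nat.Prime.add_add_one_le_mul {p q : ℕ} (hp : p.Prime) (hq : q.Prime) (hpq : p ≠ q) :
    p + q + 1 ≤ p * q := by
  have hp2 := hp.two_le
  have hq2 := hq.two_le
  rcases Nat.lt_or_gt_of_ne hpq with hlt | hlt <;> nlinarith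

theorem Polynomial.natDegree_eq_zero_of_pow_eq_C {k : Type*} [Field k] {n : ℕ} (hn : n ≠ 0)
    {P : k[X]} {c : k} (h : P ^ n = C c) : P.natDegree = 0 := by
  have hdeg : n * P.natDegree = 0 := by rw [← natDegree_pow, h, natDegree_C]
  exact (Nat.mul_eq_zero.mp hdeg).resolve_left hn

theorem Polynomial.natDegree_eq_zero_of_pow_sub_pow_eq_one {k : Type*} [Field k] {p q : ℕ}
    (hp : (p : k) ≠ 0) (hq : (q : k) ≠ 0) (hpq : p + q + 1 ≤ p * q)
    {X Y : k[X]} (h : X ^ p - Y ^ q = 1) : X.natDegree = 0 ∧ Y.natDegree = 0 := by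
  have hp0 : p ≠ 0 := fun h0 => hp (by simp [h0])
  have hq0 : q ≠ 0 := fun h0 => hq (by simp [h0])
  rcases eq_or_ne X 0 with rfl | hX
  · refine ⟨natDegree_zero, natDegree_eq_zero_of_pow_eq_C hq0 (c := -1) ?_⟩
    rw [zero_pow hp0, zero_sub] at h
    rw [map_neg, map_one]
    linear_combination -h
  rcases eq_or_ne Y 0 with rfl | hY
  · refine ⟨natDegree_eq_zero_of_pow_eq_C hp0 (c := 1) ?_, natDegree_zero⟩
    rw [map_one, ← h, zero_pow hq0, sub_zero]
  -- The constant `1` is written as `1 ^ (p * q)`, so that Fermat–Catalan applies with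
  -- `1 / p + 1 / q + 1 / (p * q) ≤ 1`.
  have hcop : IsCoprime X Y :=
    (IsCoprime.pow_iff (Nat.pos_of_ne_zero hp0) (Nat.pos_of_ne_zero hq0)).mp
      ⟨1, -1, by linear_combination h⟩
  have heq : C 1 * X ^ p + C (-1) * Y ^ q + C (-1) * (1 : k[X]) ^ (p * q) = 0 := by
    simp only [map_one, map_neg, one_pow]
    linear_combination h
  have hineq : q * (p * q) + p * q * p + p * q ≤ p * q * (p * q) := by
    calc q * (p * q) + p * q * p + p * q = p * q * (p + q + 1) := by ring
      _ ≤ p * q * (p * q) := Nat.mul_le_mul_left _ hpq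
  obtain ⟨hXdeg, hYdeg, -⟩ := flt_catalan hp0 hq0 (mul_ne_zero hp0 hq0) hineq hp hq
    (by rw [Nat.cast_mul]; exact mul_ne_zero hp hq) hX hY one_ne_zero hcop one_ne_zero
    (neg_ne_zero.mpr one_ne_zero) (neg_ne_zero.mpr one_ne_zero) heq
  exact ⟨hXdeg, hYdeg⟩

theorem stmt_7_general (k : Type*) [Field k] (ℓ : ℕ) [CharP k ℓ]
    (p q : ℕ) (hp : p.Prime) (hq : q.Prime) (hpℓ : p ≠ ℓ) (hqℓ : q ≠ ℓ) (hpq : p ≠ q)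
    (X Y : Polynomial k) (h : X ^ p - Y ^ q = 1) :
    (∃ a : k, X = C a) ∧ (∃ b : k, Y = C b) := by
  obtain ⟨hX, hY⟩ := natDegree_eq_zero_of_pow_sub_pow_eq_one
    (CharP.cast_ne_zero_of_ne_of_prime k hp hpℓ.symm)
    (CharP.cast_ne_zero_of_ne_of_prime k hq hqℓ.symm) (hp.add_add_one_le_mul hq hpq) h
  obtain ⟨a, rfl⟩ := natDegree_eq_zero.mp hX
  obtain ⟨b, rfl⟩ := natDegree_eq_zero.mp hY
  exact ⟨⟨a, rfl⟩, ⟨b, rfl⟩⟩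

theorem stmt_7 (k : Type*) [Field k] [IsAlgClosed k] (ℓ : ℕ) [CharP k ℓ]
    (p q : ℕ) (hp : p.Prime) (hq : q.Prime) (hpℓ : p ≠ ℓ) (hqℓ : q ≠ ℓ) (hpq : p ≠ q)
    (ζ : k) (hζ : IsPrimitiveRoot ζ p)
    (X Y : Polynomial k) (h : X ^ p - Y ^ q = 1) :
    (∃ a : k, X = C a) ∧ (∃ b : k, Y = C b) :=
  stmt_7_general k ℓ p q hp hq hpℓ hqℓ hpq X Y h
end

section
/- Let k be an algebraically closed field of characteristic ℓ and p an odd prime with p ≠ ℓ and ℓ ≠ 2. Suppose η ∈ k satisfies η² = −1. If X, Y ∈ k[T] satisfy X^p = Y² + 1, then X and Y are constants. -/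
/-!
Since `2η ≠ 0`, the factors `Y + η` and `Y - η` of `X ^ p` are coprime, so over the algebraically
closed field `k` they are `p`-th powers `A ^ p` and `B ^ p`. Then `A ^ p - B ^ p = 2η` is a nonzero
constant, so its divisors `A - B` and `A - ζB`, for a primitive `p`-th root of unity `ζ`, are
constants, and so is their difference `(ζ - 1)B`. Hence `B`, `Y = B ^ p + η` and `X` are constant.
-/

open Polynomial

theorem isCoprime_of_isUnit_sub {R : Type*} [CommRing R] {a b : R} (h : IsUnit (a - b)) :
    IsCoprime a b := by
  obtain ⟨u, hu⟩ := h
  exact ⟨↑u⁻¹, -↑u⁻¹, by rw [neg_mul, ← sub_eq_add_neg, ← mul_sub, ← hu, Units.inv_mul]⟩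

namespace Polynomial

variable {K : Type*} [Field K]

theorem exists_eq_C_of_dvd_C {f : K[X]} {c : K} (hc : c ≠ 0) (h : f ∣ C c) : ∃ a, f = C a := by
  obtain ⟨a, -, rfl⟩ := isUnit_iff.mp (isUnit_of_dvd_unit h (isUnit_C.mpr hc.isUnit))
  exact ⟨a, rfl⟩

theorem exists_eq_C_of_pow_sub_pow_eq_C {n : ℕ} {ζ : K} (hζ : ζ ^ n = 1) (hζ1 : ζ ≠ 1)
    {A B : K[X]} {c : K} (hc : c ≠ 0) (h : A ^ n - B ^ n = C c) : ∃ b, B = C b := by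
  have hζB : (C ζ * B) ^ n = B ^ n := by rw [mul_pow, ← C_pow, hζ, C_1, one_mul]
  obtain ⟨c₁, hc₁⟩ := exists_eq_C_of_dvd_C hc (h ▸ sub_dvd_pow_sub_pow A B n)
  obtain ⟨c₂, hc₂⟩ := exists_eq_C_of_dvd_C hc (h ▸ hζB ▸ sub_dvd_pow_sub_pow A (C ζ * B) n)
  have hB : C (ζ - 1) * B = C (c₁ - c₂) := by
    rw [C_sub, C_sub, ← hc₁, ← hc₂, C_1]
    ring
  refine ⟨(ζ - 1)⁻¹ * (c₁ - c₂), ?_⟩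
  rw [C_mul, ← hB, ← mul_assoc, ← C_mul, inv_mul_cancel₀ (sub_ne_zero.mpr hζ1), C_1, one_mul]

theorem exists_eq_C_of_pow_eq_C {R : Type*} [Semiring R] [NoZeroDivisors R] {f : R[X]} {n : ℕ}
    {c : R} (hn : n ≠ 0) (h : f ^ n = C c) : ∃ a, f = C a := by
  have hdeg := congrArg natDegree h
  rw [natDegree_pow, natDegree_C, mul_eq_zero, or_iff_right hn] at hdeg
  obtain ⟨a, ha⟩ := natDegree_eq_zero.mp hdeg
  exact ⟨a, ha.symm⟩

theorem exists_pow_eq_of_isCoprime_of_mul_eq_pow [IsAlgClosed K] {a b c : K[X]} {n : ℕ}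
    (hn : n ≠ 0) (hab : IsCoprime a b) (h : a * b = c ^ n) : ∃ d, d ^ n = a := by
  obtain ⟨d, u, hu⟩ := exists_associated_pow_of_mul_eq_pow' hab h
  obtain ⟨r, -, hr⟩ := isUnit_iff.mp u.isUnit
  obtain ⟨s, hs⟩ := IsAlgClosed.exists_pow_nat_eq r (Nat.pos_of_ne_zero hn)
  exact ⟨d * C s, by rw [mul_pow, ← C_pow, hs, hr, hu]⟩

end Polynomial

theorem stmt_10_general (k : Type*) [Field k] [IsAlgClosed k] (ℓ : ℕ) [CharP k ℓ]
    (p : ℕ) (hp : p.Prime) (hpℓ : p ≠ ℓ) (hℓ2 : ℓ ≠ 2)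
    (η : k) (hη : η ^ 2 = -1)
    (X Y : Polynomial k) (h : X ^ p = Y ^ 2 + 1) :
    (∃ a : k, X = C a) ∧ (∃ b : k, Y = C b) := by
  have h2η : 2 * η ≠ 0 := by
    refine mul_ne_zero ?_ (by rintro rfl; simp at hη)
    exact_mod_cast CharP.cast_ne_zero_of_ne_of_prime k Nat.prime_two hℓ2
  have hCη : C η ^ 2 = -1 := by rw [← C_pow, hη, C_neg, C_1]
  have hfac : (Y + C η) * (Y - C η) = X ^ p := by
    rw [h]
    linear_combination -hCη
  have hsub : Y + C η - (Y - C η) = C (2 * η) := by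
    rw [C_mul, C_ofNat]
    ring
  have hcop : IsCoprime (Y + C η) (Y - C η) :=
    isCoprime_of_isUnit_sub (hsub ▸ isUnit_C.mpr h2η.isUnit)
  obtain ⟨A, hA⟩ := exists_pow_eq_of_isCoprime_of_mul_eq_pow hp.ne_zero hcop hfac
  obtain ⟨B, hB⟩ := exists_pow_eq_of_isCoprime_of_mul_eq_pow hp.ne_zero hcop.symm
    ((mul_comm _ _).trans hfac)
  have : NeZero (p : k) := ⟨CharP.cast_ne_zero_of_ne_of_prime k hp hpℓ.symm⟩
  obtain ⟨ζ, hζ⟩ := HasEnoughRootsOfUnity.exists_primitiveRoot k p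
  obtain ⟨b, rfl⟩ := exists_eq_C_of_pow_sub_pow_eq_C (A := A) (B := B) hζ.pow_eq_one
    (hζ.ne_one hp.one_lt) h2η (by rw [hA, hB, hsub])
  have hY : Y = C (b ^ p + η) := by rw [C_add, C_pow, hB, sub_add_cancel]
  exact ⟨exists_eq_C_of_pow_eq_C hp.ne_zero (by rw [h, hY, ← C_pow, ← C_1, ← C_add]), _, hY⟩

theorem stmt_10 (k : Type*) [Field k] [IsAlgClosed k] (ℓ : ℕ) [CharP k ℓ]
    (p : ℕ) (hp : p.Prime) (hodd : Odd p) (hpℓ : p ≠ ℓ) (hℓ2 : ℓ ≠ 2)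
    (η : k) (hη : η ^ 2 = -1)
    (X Y : Polynomial k) (h : X ^ p = Y ^ 2 + 1) :
    (∃ a : k, X = C a) ∧ (∃ b : k, Y = C b) :=
  stmt_10_general k ℓ p hp hpℓ hℓ2 η hη X Y h
end

section
/- Let k be an algebraically closed field of characteristic ℓ ≠ 2, and let q be an odd prime with q ≠ ℓ. Suppose k contains a primitive q-th root of unity ζ. If X, Y ∈ k[T] satisfy X² = Y^q + 1, then X and Y are constants. -/
/-!
Since `q` is odd and `ζ` is a primitive `q`-th root of unity, `Y ^ q + 1 = ∏ μ, (Y + μ)` over the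
`q`-th roots of unity `μ`. These factors are pairwise coprime and their product `X ^ 2` is a square,
so over an algebraically closed field each factor is a square: `Y + 1 = β₀ ^ 2`, `Y + ζ = β₁ ^ 2`.
Then `(β₀ - β₁) (β₀ + β₁) = 1 - ζ` is a nonzero constant, so both factors are constants, and as
`2 ≠ 0` so is `β₀`, hence `Y`, hence `X`.
-/

open Polynomial Function

theorem IsPrimitiveRoot.pow_add_one_eq_prod_add_algebraMap {R A : Type*} [CommRing R] [IsDomain R]
    [CommRing A] [Algebra R A] {ζ : R} {n : ℕ} (hn : Odd n) (hζ : IsPrimitiveRoot ζ n) (a : A) :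
    a ^ n + 1 = ∏ μ ∈ nthRootsFinset n (1 : R), (a + algebraMap R A μ) := by
  have h := congrArg (aeval (-a)) (X_pow_sub_one_eq_prod hn.pos hζ)
  simp only [map_sub, map_pow, map_one, map_prod, aeval_X, aeval_C, hn.neg_pow,
    ← neg_add', Finset.prod_neg, hζ.card_nthRootsFinset, one_pow, neg_one_mul] at h
  exact neg_injective h

theorem pairwise_isCoprime_add_algebraMap {K A : Type*} [Field K] [CommRing A] [Algebra K A]
    (a : A) : Pairwise (IsCoprime on fun μ : K ↦ a + algebraMap K A μ) := by
  intro μ ν hμν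
  have hunit : IsUnit (-μ - -ν) := (sub_ne_zero.2 (neg_injective.ne hμν)).isUnit
  simpa [sub_eq_add_neg] using (isCoprime_X_sub_C_of_isUnit_sub hunit).map (aeval a).toRingHom

theorem Polynomial.exists_pow_eq_of_mul_eq_pow {k : Type*} [Field k] [IsAlgClosed k] {n : ℕ}
    (hn : n ≠ 0) {a b c : k[X]} (hab : IsCoprime a b) (h : a * b = c ^ n) : ∃ d, d ^ n = a := by
  obtain ⟨d, u, hu⟩ := exists_associated_pow_of_mul_eq_pow' hab h
  obtain ⟨e, -, hue⟩ := Polynomial.isUnit_iff.mp u.isUnit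
  obtain ⟨f, rfl⟩ := IsAlgClosed.exists_pow_nat_eq e (Nat.pos_of_ne_zero hn)
  exact ⟨d * C f, by rw [mul_pow, ← C_pow, hue, hu]⟩

theorem Polynomial.exists_pow_eq_of_prod_eq_pow {k ι : Type*} [Field k] [IsAlgClosed k] {n : ℕ}
    (hn : n ≠ 0) {s : Finset ι} {f : ι → k[X]} (hf : (s : Set ι).Pairwise (IsCoprime on f))
    {c : k[X]} (h : ∏ i ∈ s, f i = c ^ n) {i : ι} (hi : i ∈ s) : ∃ d, d ^ n = f i := by
  classical
  refine exists_pow_eq_of_mul_eq_pow hn (IsCoprime.prod_right fun j hj ↦ ?_)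
    ((Finset.mul_prod_erase s f hi).trans h)
  exact hf hi (Finset.mem_of_mem_erase hj) (Finset.ne_of_mem_erase hj).symm

theorem Polynomial.exists_eq_C_of_sq_sub_sq_eq_C {K : Type*} [Field K] (h2 : (2 : K) ≠ 0)
    {a b : K[X]} {c : K} (hc : c ≠ 0) (h : a ^ 2 - b ^ 2 = C c) : ∃ r, a = C r := by
  have hunit : IsUnit ((a - b) * (a + b)) := by
    rw [mul_comm, ← sq_sub_sq, h]; exact isUnit_C.2 hc.isUnit
  obtain ⟨r, -, hr⟩ := Polynomial.isUnit_iff.mp (isUnit_of_mul_isUnit_left hunit)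
  obtain ⟨s, -, hs⟩ := Polynomial.isUnit_iff.mp (isUnit_of_mul_isUnit_right hunit)
  refine ⟨(r + s) / 2, ?_⟩
  have h2a : a - b + (a + b) = C 2 * a := by rw [map_ofNat]; ring
  rw [div_eq_inv_mul, C_mul, C_add, hr, hs, h2a, ← mul_assoc, ← C_mul, inv_mul_cancel₀ h2, C_1,
    one_mul]

theorem Polynomial.exists_eq_C_of_pow_eq_C_s11 {R : Type*} [CommRing R] [IsDomain R] {n : ℕ}
    (hn : n ≠ 0) {a : R[X]} {c : R} (h : a ^ n = C c) : ∃ r, a = C r := by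
  have : n * a.natDegree = 0 := by rw [← natDegree_pow, h, natDegree_C]
  exact ⟨_, eq_C_of_natDegree_eq_zero ((mul_eq_zero.1 this).resolve_left hn)⟩

theorem stmt_11_general (k : Type*) [Field k] [IsAlgClosed k] (ℓ : ℕ) [CharP k ℓ] (hℓ2 : ℓ ≠ 2)
    (q : ℕ) (hq : q.Prime) (hodd : Odd q)
    (ζ : k) (hζ : IsPrimitiveRoot ζ q)
    (X Y : Polynomial k) (h : X ^ 2 = Y ^ q + 1) :
    (∃ a : k, X = C a) ∧ (∃ b : k, Y = C b) := by
  have h2 : (2 : k) ≠ 0 := Ring.two_ne_zero (by rwa [ringChar.eq k ℓ])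
  have hprod := (hζ.pow_add_one_eq_prod_add_algebraMap hodd Y).symm.trans h.symm
  have hcop := (pairwise_isCoprime_add_algebraMap (K := k) Y).set_pairwise
    (nthRootsFinset q (1 : k))
  obtain ⟨β₀, hβ₀⟩ := exists_pow_eq_of_prod_eq_pow two_ne_zero hcop hprod
    (one_mem_nthRootsFinset hq.pos)
  obtain ⟨β₁, hβ₁⟩ := exists_pow_eq_of_prod_eq_pow two_ne_zero hcop hprod
    (hζ.mem_nthRootsFinset hq.pos)
  obtain ⟨r, hr⟩ := exists_eq_C_of_sq_sub_sq_eq_C h2 (sub_ne_zero.2 (hζ.ne_one hq.one_lt).symm)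
    (b := β₁) (c := 1 - ζ) (by rw [hβ₀, hβ₁, algebraMap_eq, C_sub]; ring)
  have hY : Y = C (r ^ 2 - 1) := by
    rw [C_sub, C_pow, ← hr, hβ₀, algebraMap_eq, C_1, add_sub_cancel_right]
  refine ⟨exists_eq_C_of_pow_eq_C_s11 two_ne_zero (c := (r ^ 2 - 1) ^ q + 1) ?_, _, hY⟩
  rw [h, hY, C_add, C_pow, C_1]

theorem stmt_11 (k : Type*) [Field k] [IsAlgClosed k] (ℓ : ℕ) [CharP k ℓ] (hℓ2 : ℓ ≠ 2)
    (q : ℕ) (hq : q.Prime) (hodd : Odd q) (hqℓ : q ≠ ℓ)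
    (ζ : k) (hζ : IsPrimitiveRoot ζ q)
    (X Y : Polynomial k) (h : X ^ 2 = Y ^ q + 1) :
    (∃ a : k, X = C a) ∧ (∃ b : k, Y = C b) :=
  stmt_11_general k ℓ hℓ2 q hq hodd ζ hζ X Y h
end

section
/- Let k be an algebraically closed field of characteristic ℓ, and let p, q be primes different from ℓ (possibly equal). Let m, n > 1 be integers with p ∣ m and q ∣ n, and assume k contains primitive p-th and q-th roots of unity. If X, Y ∈ k[T] satisfy X^m − Y^n = 1, then X and Y are constants. -/
/-!
Write `m = p m'`, `n = q n'`; then `U = X ^ m'`, `V = Y ^ n'` solve `U ^ p - V ^ q = 1 ^ (p q)`.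
As `p` and `q` are invertible in `k`, the polynomial Fermat–Catalan theorem (Mason–Stothers plus
an `expand`-descent in positive characteristic) forces `U` and `V` to be constant as soon as
`1/p + 1/q + 1/(pq) ≤ 1`, i.e. unless `p = q = 2`; in that case `U + V` and `U - V` are units.
-/

open Polynomial

namespace Polynomial

theorem natDegree_eq_zero_of_natDegree_pow_eq_zero {R : Type*} [Semiring R] [NoZeroDivisors R]
    {n : ℕ} (hn : n ≠ 0) {U : R[X]} (h : (U ^ n).natDegree = 0) : U.natDegree = 0 := by
  rw [natDegree_pow] at h
  exact (mul_eq_zero.mp h).resolve_left hn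

variable {k : Type*} [Field k]

theorem natDegree_eq_zero_of_sq_sub_sq_eq_one (h2 : (2 : k) ≠ 0) {U V : k[X]}
    (h : U ^ 2 - V ^ 2 = 1) : U.natDegree = 0 ∧ V.natDegree = 0 := by
  obtain ⟨hsum, hdiff⟩ : IsUnit (U + V) ∧ IsUnit (U - V) :=
    IsUnit.mul_iff.mp (IsUnit.of_mul_eq_one 1 (by linear_combination h))
  obtain ⟨a, -, ha⟩ := Polynomial.isUnit_iff.mp hsum
  obtain ⟨b, -, hb⟩ := Polynomial.isUnit_iff.mp hdiff
  have hC2 : C (2⁻¹ : k) * 2 = 1 := by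
    rw [← C_ofNat, ← C_mul, inv_mul_cancel₀ h2, C_1]
  have hU : U = C (2⁻¹ * (a + b)) := by
    simp only [C_mul, C_add, ha, hb]
    linear_combination (-U) * hC2
  have hV : V = C (2⁻¹ * (a - b)) := by
    simp only [C_mul, C_sub, ha, hb]
    linear_combination (-V) * hC2
  exact ⟨by rw [hU, natDegree_C], by rw [hV, natDegree_C]⟩

theorem natDegree_eq_zero_of_pow_sub_pow_eq_one_s12 {p q : ℕ} (hp : 2 ≤ p) (hq : 2 ≤ q)
    (chp : (p : k) ≠ 0) (chq : (q : k) ≠ 0) {U V : k[X]} (h : U ^ p - V ^ q = 1) :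
    U.natDegree = 0 ∧ V.natDegree = 0 := by
  rcases eq_or_ne U 0 with rfl | hU
  · refine ⟨natDegree_zero, natDegree_eq_zero_of_natDegree_pow_eq_zero (n := q) (by omega) ?_⟩
    rw [show V ^ q = -1 by rw [zero_pow (by omega)] at h; linear_combination -h]
    simp
  rcases eq_or_ne V 0 with rfl | hV
  · refine ⟨natDegree_eq_zero_of_natDegree_pow_eq_zero (n := p) (by omega) ?_, natDegree_zero⟩
    rw [show U ^ p = 1 by rw [zero_pow (by omega)] at h; linear_combination h]
    simp
  by_cases h22 : p = 2 ∧ q = 2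
  · obtain ⟨rfl, rfl⟩ := h22
    exact natDegree_eq_zero_of_sq_sub_sq_eq_one chp h
  have hineq : q * (p * q) + p * q * p + p * q ≤ p * q * (p * q) := by
    have : p + q + 1 ≤ p * q := by
      rcases (by omega : 3 ≤ p ∨ 3 ≤ q) with h3 | h3 <;> nlinarith
    nlinarith
  have hcop : IsCoprime U V := (IsCoprime.pow_iff (m := p) (n := q) (by omega) (by omega)).mp
    ⟨1, -1, by linear_combination h⟩
  obtain ⟨hU0, hV0, -⟩ := flt_catalan (r := p * q) (c := 1) (by omega) (by omega)
    (by positivity) hineq chp chq (by exact_mod_cast mul_ne_zero chp chq) hU hV one_ne_zero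
    hcop one_ne_zero (neg_ne_zero.mpr one_ne_zero) (neg_ne_zero.mpr one_ne_zero)
    (by simp only [map_one, map_neg, one_mul, neg_mul, one_pow]; linear_combination h)
  exact ⟨hU0, hV0⟩

end Polynomial

theorem stmt_12_general (k : Type*) [Field k] (ℓ : ℕ) [CharP k ℓ]
    (p q : ℕ) (hp : p.Prime) (hq : q.Prime) (hpℓ : p ≠ ℓ) (hqℓ : q ≠ ℓ)
    (m n : ℕ) (hm : 1 < m) (hn : 1 < n) (hpm : p ∣ m) (hqn : q ∣ n)
    (X Y : Polynomial k) (h : X ^ m - Y ^ n = 1) :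
    (∃ a : k, X = C a) ∧ (∃ b : k, Y = C b) := by
  obtain ⟨m', rfl⟩ := hpm
  obtain ⟨n', rfl⟩ := hqn
  have hUV : (X ^ m') ^ p - (Y ^ n') ^ q = 1 := by
    rwa [← pow_mul, ← pow_mul, mul_comm m', mul_comm n']
  obtain ⟨hU, hV⟩ := natDegree_eq_zero_of_pow_sub_pow_eq_one_s12 hp.two_le hq.two_le
    (CharP.cast_ne_zero_of_ne_of_prime k hp hpℓ.symm)
    (CharP.cast_ne_zero_of_ne_of_prime k hq hqℓ.symm) hUV
  exact ⟨⟨_, eq_C_of_natDegree_eq_zero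
      (natDegree_eq_zero_of_natDegree_pow_eq_zero (by rintro rfl; omega) hU)⟩,
    ⟨_, eq_C_of_natDegree_eq_zero
      (natDegree_eq_zero_of_natDegree_pow_eq_zero (by rintro rfl; omega) hV)⟩⟩

theorem stmt_12 (k : Type*) [Field k] [IsAlgClosed k] (ℓ : ℕ) [CharP k ℓ]
    (p q : ℕ) (hp : p.Prime) (hq : q.Prime) (hpℓ : p ≠ ℓ) (hqℓ : q ≠ ℓ)
    (m n : ℕ) (hm : 1 < m) (hn : 1 < n) (hpm : p ∣ m) (hqn : q ∣ n)
    (ζp ζq : k) (hζp : IsPrimitiveRoot ζp p) (hζq : IsPrimitiveRoot ζq q)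
    (X Y : Polynomial k) (h : X ^ m - Y ^ n = 1) :
    (∃ a : k, X = C a) ∧ (∃ b : k, Y = C b) :=
  stmt_12_general k ℓ p q hp hq hpℓ hqℓ m n hm hn hpm hqn X Y h
end

section
/- Let k be a finite field of characteristic ℓ, and let m, n > 1 be integers both coprime to ℓ. If X, Y ∈ k[T] satisfy X^m − Y^n = 1, then X and Y are constants in k. -/
/-!
Differentiating `X ^ m - Y ^ n = 1` gives `m X ^ (m - 1) X' = n Y ^ (n - 1) Y'`, and `X`, `Y` are
coprime, so `X ^ (m - 1) ∣ Y'` and `Y ^ (n - 1) ∣ X'`. Were the derivatives nonzero, this would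
force `deg X < deg Y < deg X`; hence `X' = Y' = 0`. In characteristic zero this makes `X` and `Y`
constant. In characteristic `p` it makes them polynomials in `T ^ p`; substituting `T` for `T ^ p`
gives a solution whose degrees are smaller by a factor of `p`, and infinite descent concludes.
-/

open Polynomial

namespace Polynomial

variable {k : Type*} [Field k] {m n : ℕ} {f g : k[X]}

theorem pow_dvd_derivative_of_derivative_pow_eq (hc : IsCoprime f g)
    (hd : derivative (f ^ m) = derivative (g ^ n)) (hn : (n : k) ≠ 0) :
    f ^ (m - 1) ∣ derivative g := by
  have hdvd : f ^ (m - 1) ∣ C (n : k) * (g ^ (n - 1) * derivative g) := by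
    rw [← mul_assoc, ← derivative_pow, ← hd, derivative_pow]
    exact dvd_mul_of_dvd_left (dvd_mul_left _ _) _
  rw [(isUnit_C.mpr hn.isUnit).dvd_mul_left] at hdvd
  exact hc.pow.dvd_of_dvd_mul_left hdvd

theorem natDegree_lt_of_derivative_pow_eq (hc : IsCoprime f g)
    (hd : derivative (f ^ m) = derivative (g ^ n)) (hm : 1 < m) (hn : (n : k) ≠ 0)
    (hg : derivative g ≠ 0) : f.natDegree < g.natDegree := by
  have hle := natDegree_le_of_dvd (pow_dvd_derivative_of_derivative_pow_eq hc hd hn) hg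
  rw [natDegree_pow] at hle
  calc f.natDegree ≤ (m - 1) * f.natDegree := Nat.le_mul_of_pos_left _ (by omega)
    _ ≤ (derivative g).natDegree := hle
    _ < g.natDegree := natDegree_derivative_lt fun h0 => hg (derivative_of_natDegree_zero h0)

theorem derivative_eq_zero_of_pow_sub_pow_eq_one (hm : 1 < m) (hn : 1 < n)
    (hmk : (m : k) ≠ 0) (hnk : (n : k) ≠ 0) (h : f ^ m - g ^ n = 1) :
    derivative f = 0 ∧ derivative g = 0 := by
  have hc : IsCoprime f g := by
    rw [← IsCoprime.pow_iff (by omega : 0 < m) (by omega : 0 < n)]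
    exact ⟨1, -1, by linear_combination h⟩
  have hd : derivative (f ^ m) = derivative (g ^ n) := by
    rw [sub_eq_iff_eq_add.mp h, derivative_add, derivative_one, zero_add]
  have hfg : derivative f = 0 ↔ derivative g = 0 := by
    rw [← derivative_pow_eq_zero hmk, hd, derivative_pow_eq_zero hnk]
  by_contra hne
  have hf : derivative f ≠ 0 := fun hf => hne ⟨hf, hfg.mp hf⟩
  have hg : derivative g ≠ 0 := fun hg => hf (hfg.mpr hg)
  exact (natDegree_lt_of_derivative_pow_eq hc hd hm hnk hg).asymm
    (natDegree_lt_of_derivative_pow_eq hc.symm hd.symm hn hmk hf)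

theorem natDegree_eq_zero_of_pow_sub_pow_eq_one_of_charP (p : ℕ) [hp : Fact p.Prime]
    [CharP k p] (hm : 1 < m) (hn : 1 < n) (hmk : (m : k) ≠ 0) (hnk : (n : k) ≠ 0)
    (h : f ^ m - g ^ n = 1) : f.natDegree = 0 ∧ g.natDegree = 0 := by
  induction hN : f.natDegree + g.natDegree using Nat.strong_induction_on generalizing f g with
  | _ N ih =>
    obtain ⟨hf, hg⟩ := derivative_eq_zero_of_pow_sub_pow_eq_one hm hn hmk hnk h
    set f₀ := contract p f
    set g₀ := contract p g
    have hf₀ : expand k p f₀ = f := expand_contract p hf hp.out.ne_zero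
    have hg₀ : expand k p g₀ = g := expand_contract p hg hp.out.ne_zero
    have h₀ : f₀ ^ m - g₀ ^ n = 1 :=
      expand_injective hp.out.pos (by rw [map_sub, map_pow, map_pow, hf₀, hg₀, h, map_one])
    have hdf : f.natDegree = f₀.natDegree * p := by rw [← natDegree_expand, hf₀]
    have hdg : g.natDegree = g₀.natDegree * p := by rw [← natDegree_expand, hg₀]
    suffices f₀.natDegree = 0 ∧ g₀.natDegree = 0 by simp [hdf, hdg, this]
    rcases Nat.eq_zero_or_pos (f₀.natDegree + g₀.natDegree) with h0 | hpos
    · omega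
    · refine ih _ ?_ h₀ rfl
      rw [← hN, hdf, hdg, ← add_mul]
      exact lt_mul_of_one_lt_right hpos hp.out.one_lt

theorem natDegree_eq_zero_of_pow_sub_pow_eq_one_s19 (hm : 1 < m) (hn : 1 < n)
    (hmk : (m : k) ≠ 0) (hnk : (n : k) ≠ 0) (h : f ^ m - g ^ n = 1) :
    f.natDegree = 0 ∧ g.natDegree = 0 := by
  obtain _ | ⟨p, _, _⟩ := CharP.exists' k
  · obtain ⟨hf, hg⟩ := derivative_eq_zero_of_pow_sub_pow_eq_one hm hn hmk hnk h
    exact ⟨derivative_eq_zero.mp hf, derivative_eq_zero.mp hg⟩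
  · exact natDegree_eq_zero_of_pow_sub_pow_eq_one_of_charP p hm hn hmk hnk h

end Polynomial

theorem stmt_19_general (k : Type*) [Field k] (ℓ : ℕ) [CharP k ℓ]
    (m n : ℕ) (hm : 1 < m) (hn : 1 < n) (hmℓ : ¬ℓ ∣ m) (hnℓ : ¬ℓ ∣ n)
    (X Y : Polynomial k) (h : X ^ m - Y ^ n = 1) :
    (∃ a : k, X = C a) ∧ (∃ b : k, Y = C b) := by
  have hmk : (m : k) ≠ 0 := (CharP.cast_eq_zero_iff k ℓ m).not.mpr hmℓ
  have hnk : (n : k) ≠ 0 := (CharP.cast_eq_zero_iff k ℓ n).not.mpr hnℓ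
  obtain ⟨hX, hY⟩ := natDegree_eq_zero_of_pow_sub_pow_eq_one_s19 hm hn hmk hnk h
  exact ⟨⟨_, eq_C_of_natDegree_eq_zero hX⟩, ⟨_, eq_C_of_natDegree_eq_zero hY⟩⟩

theorem stmt_19 (k : Type*) [Field k] [Finite k] (ℓ : ℕ) [CharP k ℓ]
    (m n : ℕ) (hm : 1 < m) (hn : 1 < n) (hmℓ : ¬ℓ ∣ m) (hnℓ : ¬ℓ ∣ n)
    (X Y : Polynomial k) (h : X ^ m - Y ^ n = 1) :
    (∃ a : k, X = C a) ∧ (∃ b : k, Y = C b) :=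
  stmt_19_general k ℓ m n hm hn hmℓ hnℓ X Y h
end
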